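/- There exists a finite algebra (S,*,') of type ⟨2,1⟩ satisfying x = (x * x') * x, (x * x') * (y' * y) = (y' * y) * (x * x'), and x * (y * z) = (x'' * y) * z, whose binary operation is not associative; hence replacing (E3) by x(yz) = (x''y)z does not yield a basis for inverse semigroups. -/

import Mathlib

/-!
Over a commutative ring `R` with a unit `u ≠ 1`, put `x * y = u x + y` and `x' = -u x`. Then
`x * x' = 0` is a left identity, `x'' = u² x`, and `(x * y) * z - x * (y * z) = (u² - u) x`.
So the first identity always holds, the third holds as soon as `u³ = 1`, the second (whose two
sides are `y' * y` and `u (y' * y)`) as soon as `(1 - u)² (1 + u) = 0`, and associativity fails.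
In `ZMod 9`, `u = 4` satisfies all of this.
-/

section TwistedAlgebra

variable {R : Type*} [CommRing R] (u : R)

def twistMul (x y : R) : R := u * x + y

def twistInv (x : R) : R := -(u * x)

theorem twistMul_twistMul_twistInv (x : R) :
    twistMul u (twistMul u x (twistInv u x)) x = x := by
  simp only [twistMul, twistInv]
  ring

theorem twistMul_twistInv_comm_twistInv_twistMul (hu : (1 - u) ^ 2 * (1 + u) = 0) (x y : R) :
    twistMul u (twistMul u x (twistInv u x)) (twistMul u (twistInv u y) y) =
      twistMul u (twistMul u (twistInv u y) y) (twistMul u x (twistInv u x)) := by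
  simp only [twistMul, twistInv]
  linear_combination y * hu

theorem twistMul_assoc_twistInv_twistInv (hu : u ^ 3 = 1) (x y z : R) :
    twistMul u x (twistMul u y z) = twistMul u (twistMul u (twistInv u (twistInv u x)) y) z := by
  simp only [twistMul, twistInv]
  linear_combination (-(u * x)) * hu

theorem twistMul_assoc_iff (x y z : R) :
    twistMul u (twistMul u x y) z = twistMul u x (twistMul u y z) ↔ u ^ 2 * x = u * x := by
  simp only [twistMul]
  constructor <;> intro h <;> linear_combination h

end TwistedAlgebra

theorem stmt : ∃ (S : Type) (_ : Fintype S) (m : S → S → S) (i : S → S),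
    (∀ x, m (m x (i x)) x = x) ∧
    (∀ x y, m (m x (i x)) (m (i y) y) = m (m (i y) y) (m x (i x))) ∧
    (∀ x y z, m x (m y z) = m (m (i (i x)) y) z) ∧
    ∃ x y z, m (m x y) z ≠ m x (m y z) := by
  have hcube : (4 : ZMod 9) ^ 3 = 1 := by decide
  have hsq : (1 - 4 : ZMod 9) ^ 2 * (1 + 4) = 0 := by decide
  refine ⟨ZMod 9, inferInstance, twistMul 4, twistInv 4,
    twistMul_twistMul_twistInv 4, twistMul_twistInv_comm_twistInv_twistMul 4 hsq,
    twistMul_assoc_twistInv_twistInv 4 hcube, 1, 0, 0, ?_⟩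
  rw [Ne, twistMul_assoc_iff]
  decide
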